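/- Let A be an m-stochastic tensor of dimension N with m ≥ 3 that is reducible with respect to a nonempty proper subset I ⊂ {1,...,N} of cardinality k (i.e. A_{i_1...i_m} = 0 whenever i_1 ∈ I and i_2,...,i_m ∉ I). Then k ≥ N/2. -/
import Mathlib


open Finset

/-- An `m`-stochastic tensor of dimension `N`: all entries are nonnegative and
the sum over any single index (the others being fixed) equals `1`. -/
def MStochastic {N m : ℕ} (A : (Fin m → Fin N) → ℝ) : Prop :=
  (∀ f, 0 ≤ A f) ∧
    ∀ (t : Fin m) (f : Fin m → Fin N), ∑ v : Fin N, A (Function.update f t v) = 1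

/-- The multilinear action of the tensor `A`, with output in slot `t` and the
probability vector `p s` fed into each input slot `s ≠ t`:
`A[p]_{i} = Σ_{g, g t = i} A_g · Π_{s ≠ t} (p s)_{g s}`. -/
def mAct {N m : ℕ} (A : (Fin m → Fin N) → ℝ) (t : Fin m) (p : Fin m → Fin N → ℝ) :
    Fin N → ℝ :=
  fun i => ∑ g : Fin m → Fin N,
    if g t = i then A g * ∏ s ∈ Finset.univ.erase t, p s (g s) else 0

variable {N m : ℕ} {A : (Fin m → Fin N) → ℝ}

lemma split_box (A : (Fin m → Fin N) → ℝ) (S : Fin m → Finset (Fin N)) (u : Fin m) :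
    ∑ g ∈ Fintype.piFinset S, A g =
      ∑ v ∈ S u, ∑ g ∈ Fintype.piFinset (Function.update S u {v}), A g := by
  rw [← Finset.sum_fiberwise_of_maps_to (g := fun g : Fin m → Fin N => g u)
      (fun g hg => (Fintype.mem_piFinset.mp hg u)) A]
  refine Finset.sum_congr rfl fun v hv => Finset.sum_congr ?_ fun _ _ => rfl
  ext g
  simp only [Finset.mem_filter, Fintype.mem_piFinset, Function.update_apply]
  constructor
  · rintro ⟨h1, h2⟩ t
    by_cases ht : t = u
    · subst ht; simp [h2]
    · simp [ht, h1 t]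
  · intro h
    have hu' := h u
    simp at hu'
    refine ⟨fun t => ?_, hu'⟩
    have := h t
    by_cases ht : t = u
    · subst ht; simp at this; simp [this, hv]
    · simpa [ht] using this

lemma base_box (hA : MStochastic A) (t0 : Fin m) (f : Fin m → Fin N) :
    ∑ g ∈ Fintype.piFinset (fun t => if t = t0 then (univ : Finset (Fin N)) else {f t}), A g
      = 1 := by
  rw [← hA.2 t0 f]
  refine Finset.sum_nbij' (i := fun g => g t0) (j := fun v => Function.update f t0 v)
    ?_ ?_ ?_ ?_ ?_
  · intro g hg; exact Finset.mem_univ _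
  · intro v hv
    simp only [Fintype.mem_piFinset]
    intro t
    by_cases ht : t = t0
    · subst ht; simp
    · simp [ht, Function.update_apply]
  · intro g hg
    funext t
    by_cases ht : t = t0
    · subst ht; simp
    · have := Fintype.mem_piFinset.mp hg t
      simp [ht] at this
      simp [Function.update_apply, ht, this]
  · intro v hv; simp
  · intro g hg
    congr 1
    funext t
    by_cases ht : t = t0
    · subst ht; simp
    · have := Fintype.mem_piFinset.mp hg t
      simp [ht] at this
      simp [Function.update_apply, ht, this]

lemma main_box (hA : MStochastic A) (S : Fin m → Finset (Fin N)) (t0 : Fin m)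
    (T : Finset (Fin m)) (hT : t0 ∉ T) (f : Fin m → Fin N) :
    ∑ g ∈ Fintype.piFinset
        (fun t => if t = t0 then (univ : Finset (Fin N)) else if t ∈ T then S t else {f t}),
        A g = ∏ t ∈ T, ((S t).card : ℝ) := by
  induction T using Finset.induction_on generalizing f with
  | empty => simpa using base_box hA t0 f
  | @insert u T' hu ih =>
    have hu0 : u ≠ t0 := fun h => hT (h ▸ Finset.mem_insert_self u T')
    have ht0T' : t0 ∉ T' := fun h => hT (Finset.mem_insert_of_mem h)
    rw [split_box A _ u]
    have hSu : (if u = t0 then (univ : Finset (Fin N)) else if u ∈ insert u T' then S u else {f u}) = S u := by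
      simp [hu0]
    rw [hSu]
    have key : ∀ v : Fin N,
        Function.update
          (fun t => if t = t0 then (univ : Finset (Fin N)) else if t ∈ insert u T' then S t else {f t})
          u {v}
        = fun t => if t = t0 then (univ : Finset (Fin N)) else if t ∈ T' then S t
            else {Function.update f u v t} := by
      intro v
      funext t
      by_cases htu : t = u
      · subst htu; simp [Function.update_self, hu0, hu]
      · rw [Function.update_of_ne htu]
        by_cases ht0 : t = t0
        · simp [ht0]
        · simp only [ht0, if_false, Finset.mem_insert, htu, false_or,
            Function.update_of_ne htu]
    calc ∑ v ∈ S u, ∑ g ∈ Fintype.piFinset (Function.update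
          (fun t => if t = t0 then (univ : Finset (Fin N)) else if t ∈ insert u T' then S t else {f t}) u {v}), A g
        = ∑ v ∈ S u, ∏ t ∈ T', ((S t).card : ℝ) := by
          refine Finset.sum_congr rfl fun v hv => ?_
          rw [key v]
          exact ih ht0T' (Function.update f u v)
      _ = ((S u).card : ℝ) * ∏ t ∈ T', ((S t).card : ℝ) := by
          rw [Finset.sum_const, nsmul_eq_mul]
      _ = ∏ t ∈ insert u T', ((S t).card : ℝ) := by rw [Finset.prod_insert hu]

lemma full_box (hA : MStochastic A) (hN : 0 < N) (S : Fin m → Finset (Fin N)) (t0 : Fin m) :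
    ∑ g ∈ Fintype.piFinset (fun t => if t = t0 then (univ : Finset (Fin N)) else S t), A g
      = ∏ t ∈ Finset.univ.erase t0, ((S t).card : ℝ) := by
  have f : Fin m → Fin N := fun _ => ⟨0, hN⟩
  have := main_box hA S t0 (Finset.univ.erase t0) (by simp) f
  rw [← this]
  congr 1
  apply congrArg
  funext t
  by_cases ht : t = t0 <;> simp [ht]

theorem reducible_card_ge_half {N m : ℕ} (hm : 3 ≤ m)
    (A : (Fin m → Fin N) → ℝ) (hA : MStochastic A)
    (I : Finset (Fin N)) (hne : I.Nonempty) (hproper : I ≠ Finset.univ)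
    (hred : ∀ g : Fin m → Fin N,
      g ⟨0, by omega⟩ ∈ I → (∀ t : Fin m, t ≠ ⟨0, by omega⟩ → g t ∉ I) → A g = 0) :
    N ≤ 2 * I.card := by
  set i0 : Fin m := ⟨0, by omega⟩ with hi0def
  set i1 : Fin m := ⟨1, by omega⟩ with hi1def
  set i2 : Fin m := ⟨2, by omega⟩ with hi2def
  have hred' : ∀ g : Fin m → Fin N,
      g i0 ∈ I → (∀ t : Fin m, t ≠ i0 → g t ∉ I) → A g = 0 := hred
  have hi01 : i0 ≠ i1 := by simp [hi0def, hi1def, Fin.ext_iff]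
  have hi02 : i0 ≠ i2 := by simp [hi0def, hi2def, Fin.ext_iff]
  have hi12 : i1 ≠ i2 := by simp [hi1def, hi2def, Fin.ext_iff]
  obtain ⟨a, haI⟩ := hne
  have hN : 0 < N := a.pos
  set k := I.card with hk
  set n := Iᶜ.card with hn
  have hkpos : 0 < k := Finset.card_pos.mpr ⟨a, haI⟩
  have hnpos : 0 < n := Finset.card_pos.mpr (by
    rw [Finset.nonempty_iff_ne_empty]
    intro h
    exact hproper ((Finset.compl_eq_empty_iff I).mp h))
  have hkn : k + n = N := by
    rw [hk, hn, Finset.card_add_card_compl, Fintype.card_fin]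
  -- the two slot patterns
  set SA : Fin m → Finset (Fin N) := fun t => if t = i0 then I else Iᶜ with hSA
  set SB : Fin m → Finset (Fin N) := fun t => if t = i0 ∨ t = i1 then I else Iᶜ with hSB
  -- Sum1 : slot0 ∈ I, slot1 free, rest ∈ Iᶜ
  have hSum1 : ∑ g ∈ Fintype.piFinset (fun t => if t = i1 then (univ : Finset (Fin N)) else SA t), A g
      = (k : ℝ) * (n : ℝ) ^ (m - 2) := by
    rw [full_box hA hN SA i1]
    rw [← Finset.mul_prod_erase _ _ (show i0 ∈ (univ : Finset (Fin m)).erase i1 by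
      simp [Finset.mem_erase, hi01])]
    have hcard : (((univ : Finset (Fin m)).erase i1).erase i0).card = m - 2 := by
      rw [Finset.card_erase_of_mem (by simp [Finset.mem_erase, hi01]),
        Finset.card_erase_of_mem (Finset.mem_univ _), Finset.card_univ, Fintype.card_fin]
      omega
    have hconst : ∀ t ∈ (((univ : Finset (Fin m)).erase i1).erase i0),
        ((SA t).card : ℝ) = (n : ℝ) := by
      intro t ht
      simp only [Finset.mem_erase] at ht
      simp [hSA, ht.1, hn]
    rw [Finset.prod_congr rfl hconst, Finset.prod_const, hcard]
    simp [hSA, hk]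
  -- Sum2 : slot0,slot1 ∈ I, slot2 free, rest ∈ Iᶜ
  have hSum2 : ∑ g ∈ Fintype.piFinset (fun t => if t = i2 then (univ : Finset (Fin N)) else SB t), A g
      = (k : ℝ) * ((k : ℝ) * (n : ℝ) ^ (m - 3)) := by
    rw [full_box hA hN SB i2]
    rw [← Finset.mul_prod_erase _ _ (show i0 ∈ (univ : Finset (Fin m)).erase i2 by
      simp [Finset.mem_erase, hi02])]
    rw [← Finset.mul_prod_erase _ _ (show i1 ∈ ((univ : Finset (Fin m)).erase i2).erase i0 by
      simp [Finset.mem_erase, hi12, Ne.symm hi01])]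
    have hcard : ((((univ : Finset (Fin m)).erase i2).erase i0).erase i1).card = m - 3 := by
      rw [Finset.card_erase_of_mem (by simp [Finset.mem_erase, hi12, Ne.symm hi01]),
        Finset.card_erase_of_mem (by simp [Finset.mem_erase, hi02]),
        Finset.card_erase_of_mem (Finset.mem_univ _), Finset.card_univ, Fintype.card_fin]
      omega
    have hconst : ∀ t ∈ ((((univ : Finset (Fin m)).erase i2).erase i0).erase i1),
        ((SB t).card : ℝ) = (n : ℝ) := by
      intro t ht
      simp only [Finset.mem_erase] at ht
      simp [hSB, ht.1, ht.2.1, hn]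
    rw [Finset.prod_congr rfl hconst, Finset.prod_const, hcard]
    simp [hSB, hk]
  -- reducibility: Sum1 equals sum over SB-box
  have hstep : ∑ g ∈ Fintype.piFinset (fun t => if t = i1 then (univ : Finset (Fin N)) else SA t), A g
      = ∑ g ∈ Fintype.piFinset SB, A g := by
    rw [split_box A _ i1, split_box A SB i1]
    have hSBi1 : SB i1 = I := by simp [hSB]
    have hS1i1 : (if i1 = i1 then (univ : Finset (Fin N)) else SA i1) = univ := by simp
    rw [hSBi1, hS1i1]
    have hupd : ∀ v : Fin N,
        Function.update (fun t => if t = i1 then (univ : Finset (Fin N)) else SA t) i1 {v}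
          = Function.update SB i1 {v} := by
      intro v
      funext t
      by_cases ht : t = i1
      · subst ht; simp
      · rw [Function.update_of_ne ht, Function.update_of_ne ht]
        simp only [ht, if_false, hSB, hSA, or_false]
    have hzero : ∀ v ∈ Iᶜ,
        ∑ g ∈ Fintype.piFinset (Function.update SB i1 {v}), A g = 0 := by
      intro v hv
      apply Finset.sum_eq_zero
      intro g hg
      have hmem := Fintype.mem_piFinset.mp hg
      apply hred' g
      · have := hmem i0
        rw [Function.update_of_ne hi01] at this
        simpa [hSB] using this
      · intro t ht
        by_cases ht1 : t = i1
        · subst ht1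
          have := hmem i1
          simp at this
          rw [this]
          exact Finset.mem_compl.mp hv
        · have := hmem t
          rw [Function.update_of_ne ht1] at this
          simp only [hSB, ht, ht1, or_self, if_false] at this
          exact Finset.mem_compl.mp this
    calc ∑ v : Fin N, ∑ g ∈ Fintype.piFinset
            (Function.update (fun t => if t = i1 then (univ : Finset (Fin N)) else SA t) i1 {v}), A g
        = ∑ v : Fin N, ∑ g ∈ Fintype.piFinset (Function.update SB i1 {v}), A g := by
          refine Finset.sum_congr rfl fun v _ => ?_
          rw [hupd v]
      _ = (∑ v ∈ I, ∑ g ∈ Fintype.piFinset (Function.update SB i1 {v}), A g)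
          + ∑ v ∈ Iᶜ, ∑ g ∈ Fintype.piFinset (Function.update SB i1 {v}), A g := by
          rw [Finset.sum_add_sum_compl]
      _ = ∑ v ∈ I, ∑ g ∈ Fintype.piFinset (Function.update SB i1 {v}), A g := by
          rw [Finset.sum_eq_zero hzero, add_zero]
  -- monotonicity: SB-box sum ≤ Sum2
  have hmono : ∑ g ∈ Fintype.piFinset SB, A g
      ≤ ∑ g ∈ Fintype.piFinset (fun t => if t = i2 then (univ : Finset (Fin N)) else SB t), A g := by
    apply Finset.sum_le_sum_of_subset_of_nonneg
    · apply Fintype.piFinset_subset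
      intro t
      by_cases ht : t = i2 <;> simp [ht]
    · intro g _ _; exact hA.1 g
  have hineq : (k : ℝ) * (n : ℝ) ^ (m - 2) ≤ (k : ℝ) * ((k : ℝ) * (n : ℝ) ^ (m - 3)) := by
    rw [← hSum1, ← hSum2, hstep]; exact hmono
  have hm2 : m - 2 = (m - 3) + 1 := by omega
  rw [hm2, pow_succ] at hineq
  have hkR : (0 : ℝ) < (k : ℝ) := by exact_mod_cast hkpos
  have hnR : (0 : ℝ) < (n : ℝ) ^ (m - 3) := by
    apply pow_pos; exact_mod_cast hnpos
  have h1 : (n : ℝ) ^ (m - 3) * (n : ℝ) ≤ (k : ℝ) * (n : ℝ) ^ (m - 3) :=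
    le_of_mul_le_mul_left hineq hkR
  have h2 : (n : ℝ) ^ (m - 3) * (n : ℝ) ≤ (n : ℝ) ^ (m - 3) * (k : ℝ) := by
    calc (n : ℝ) ^ (m - 3) * (n : ℝ) ≤ (k : ℝ) * (n : ℝ) ^ (m - 3) := h1
      _ = (n : ℝ) ^ (m - 3) * (k : ℝ) := mul_comm _ _
  have hnk : (n : ℝ) ≤ (k : ℝ) := le_of_mul_le_mul_left h2 hnR
  have : n ≤ k := by exact_mod_cast hnk
  omega
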